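/- Let M be a square joint probability matrix on a finite type α and let M̄ = (M + Mᵀ)/2 be its symmetrized matrix. Then the conditional entropy of M̄ is bounded by the average of the two conditional entropies of M plus one bit: H_{M̄}(Y|X) ≤ (1/2)·(H_M(Y|X) + H_M(X|Y)) + 1. (A sharpened form of the symmetrization theorem, obtained by combining the joint-entropy and marginal-entropy estimates for M̄.) -/

import Mathlib

/-- A probability vector on a finite type: nonnegative entries summing to 1. -/
def IsProbVec {α : Type*} [Fintype α] (p : α → ℝ) : Prop :=
  (∀ a, 0 ≤ p a) ∧ ∑ a, p a = 1

/-- Binary Shannon entropy of a (probability) vector. -/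
noncomputable def binH {α : Type*} [Fintype α] (p : α → ℝ) : ℝ :=
  (∑ a, Real.negMulLog (p a)) / Real.log 2
/-- A joint probability matrix on finite types α and β. -/
def IsJointProbMat {α β : Type*} [Fintype α] [Fintype β] (M : α → β → ℝ) : Prop :=
  (∀ a b, 0 ≤ M a b) ∧ ∑ a, ∑ b, M a b = 1

/-- Binary joint entropy of a joint probability matrix, viewed as a vector on α × β. -/
noncomputable def jointH {α β : Type*} [Fintype α] [Fintype β] (M : α → β → ℝ) : ℝ :=
  binH (fun ab : α × β => M ab.1 ab.2)

/-- Row marginal of a joint probability matrix. -/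
noncomputable def rowMarg {α β : Type*} [Fintype α] [Fintype β] (M : α → β → ℝ) : α → ℝ :=
  fun a => ∑ b, M a b

/-- Column marginal of a joint probability matrix. -/
noncomputable def colMarg {α β : Type*} [Fintype α] [Fintype β] (M : α → β → ℝ) : β → ℝ :=
  fun b => ∑ a, M a b

/-- Binary conditional entropy H_M(Y|X) = H(M) - H(rowMarg M). -/
noncomputable def condHYX {α β : Type*} [Fintype α] [Fintype β] (M : α → β → ℝ) : ℝ :=
  jointH M - binH (rowMarg M)

/-- Binary conditional entropy H_M(X|Y) = H(M) - H(colMarg M). -/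
noncomputable def condHXY {α β : Type*} [Fintype α] [Fintype β] (M : α → β → ℝ) : ℝ :=
  jointH M - binH (colMarg M)

/-- Symmetrized matrix (M + Mᵀ)/2 of a square joint probability matrix. -/
noncomputable def symmetrize {α : Type*} [Fintype α] (M : α → α → ℝ) : α → α → ℝ :=
  fun a b => (M a b + M b a) / 2

/-! The symmetrized pair is obtained from the original one by swapping its coordinates according
to a fair coin, so the joint entropy grows by at most the one bit of the coin:
`H(M̄) ≤ H(M) + 1`. The row marginal of `M̄` is the average of the two marginals of `M`, so by
concavity of entropy `H(r M̄) ≥ (H(r M) + H(c M)) / 2`. Subtracting the two estimates gives the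
theorem. -/

open Real

lemma Real.negMulLog_add_le {x y : ℝ} (hx : 0 ≤ x) (hy : 0 ≤ y) :
    negMulLog (x + y) ≤ negMulLog x + negMulLog y := by
  have key : ∀ {u v : ℝ}, 0 ≤ u → 0 ≤ v → -u * log (u + v) ≤ negMulLog u := by
    intro u v hu hv
    rcases hu.eq_or_lt with rfl | hu
    · simp
    · have := log_le_log hu (le_add_of_nonneg_right hv)
      unfold negMulLog
      nlinarith
  have hx' := key hx hy
  have hy' := key hy hx
  rw [add_comm y x] at hy'
  unfold negMulLog at *
  linarith

lemma Real.negMulLog_div_two (x : ℝ) :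
    negMulLog (x / 2) = negMulLog x / 2 + x / 2 * log 2 := by
  rw [div_eq_mul_inv, negMulLog_mul]
  simp only [negMulLog, log_inv]
  ring

lemma Real.negMulLog_midpoint_le {x y : ℝ} (hx : 0 ≤ x) (hy : 0 ≤ y) :
    negMulLog ((x + y) / 2) ≤ (negMulLog x + negMulLog y) / 2 + (x + y) / 2 * log 2 := by
  rw [negMulLog_div_two]
  linarith [negMulLog_add_le hx hy]

lemma Real.midpoint_negMulLog_le {x y : ℝ} (hx : 0 ≤ x) (hy : 0 ≤ y) :
    (negMulLog x + negMulLog y) / 2 ≤ negMulLog ((x + y) / 2) := by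
  have h := concaveOn_negMulLog.2 (Set.mem_Ici.2 hx) (Set.mem_Ici.2 hy)
    (by norm_num : (0 : ℝ) ≤ 1 / 2) (by norm_num : (0 : ℝ) ≤ 1 / 2) (by norm_num)
  simp only [smul_eq_mul] at h
  rw [show (x + y) / 2 = 1 / 2 * x + 1 / 2 * y by ring]
  linarith

section binH

variable {α β : Type*} [Fintype α] [Fintype β]

lemma IsProbVec.comp_equiv {p : α → ℝ} (hp : IsProbVec p) (e : β ≃ α) : IsProbVec (p ∘ e) :=
  ⟨fun b => hp.1 (e b), by rw [Function.comp_def, e.sum_comp p]; exact hp.2⟩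

lemma binH_comp_equiv (p : α → ℝ) (e : β ≃ α) : binH (p ∘ e) = binH p := by
  unfold binH
  rw [Function.comp_def, e.sum_comp fun a => negMulLog (p a)]

lemma binH_midpoint_le {p q : α → ℝ} (hp : IsProbVec p) (hq : IsProbVec q) :
    binH (fun a => (p a + q a) / 2) ≤ (binH p + binH q) / 2 + 1 := by
  have hsum : ∑ a, (negMulLog (p a) + negMulLog (q a)) / 2 + ∑ a, (p a + q a) / 2 * log 2
      = (∑ a, negMulLog (p a) + ∑ a, negMulLog (q a)) / 2 + log 2 := by
    rw [← Finset.sum_mul, ← Finset.sum_div, ← Finset.sum_div, Finset.sum_add_distrib,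
      Finset.sum_add_distrib, hp.2, hq.2]
    ring
  have hlog : 0 < log 2 := log_pos one_lt_two
  unfold binH
  rw [div_le_iff₀ hlog]
  calc ∑ a, negMulLog ((p a + q a) / 2)
      ≤ ∑ a, ((negMulLog (p a) + negMulLog (q a)) / 2 + (p a + q a) / 2 * log 2) :=
        Finset.sum_le_sum fun a _ => negMulLog_midpoint_le (hp.1 a) (hq.1 a)
    _ = _ := by
        rw [Finset.sum_add_distrib, hsum]
        field_simp

lemma midpoint_binH_le {p q : α → ℝ} (hp : ∀ a, 0 ≤ p a) (hq : ∀ a, 0 ≤ q a) :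
    (binH p + binH q) / 2 ≤ binH (fun a => (p a + q a) / 2) := by
  unfold binH
  calc ((∑ a, negMulLog (p a)) / log 2 + (∑ a, negMulLog (q a)) / log 2) / 2
      = (∑ a, (negMulLog (p a) + negMulLog (q a)) / 2) / log 2 := by
        rw [← Finset.sum_div, Finset.sum_add_distrib]
        ring
    _ ≤ (∑ a, negMulLog ((p a + q a) / 2)) / log 2 := by
        gcongr with a
        exact midpoint_negMulLog_le (hp a) (hq a)

end binH

section symmetrize

variable {α : Type*} [Fintype α]

lemma IsJointProbMat.isProbVec {β : Type*} [Fintype β] {M : α → β → ℝ}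
    (hM : IsJointProbMat M) : IsProbVec fun ab : α × β => M ab.1 ab.2 :=
  ⟨fun ab => hM.1 ab.1 ab.2, by rw [Fintype.sum_prod_type]; exact hM.2⟩

lemma jointH_symmetrize_le {M : α → α → ℝ} (hM : IsJointProbMat M) :
    jointH (symmetrize M) ≤ jointH M + 1 := by
  have hswap := hM.isProbVec.comp_equiv (Equiv.prodComm α α)
  calc jointH (symmetrize M)
      ≤ (jointH M + binH ((fun ab : α × α => M ab.1 ab.2) ∘ Equiv.prodComm α α)) / 2 + 1 :=
        binH_midpoint_le hM.isProbVec hswap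
    _ = jointH M + 1 := by rw [binH_comp_equiv]; unfold jointH; ring

lemma rowMarg_symmetrize (M : α → α → ℝ) :
    rowMarg (symmetrize M) = fun a => (rowMarg M a + colMarg M a) / 2 := by
  ext a
  simp only [rowMarg, colMarg, symmetrize, ← Finset.sum_div, Finset.sum_add_distrib]

lemma midpoint_binH_marg_le_binH_rowMarg_symmetrize {M : α → α → ℝ} (hM : ∀ a b, 0 ≤ M a b) :
    (binH (rowMarg M) + binH (colMarg M)) / 2 ≤ binH (rowMarg (symmetrize M)) := by
  rw [rowMarg_symmetrize]
  exact midpoint_binH_le (fun a => Finset.sum_nonneg fun b _ => hM a b)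
    (fun b => Finset.sum_nonneg fun a _ => hM a b)

end symmetrize

/-- Sharpened symmetrization theorem: the conditional entropy of the symmetrized matrix
is at most the average of the two conditional entropies of `M`, plus one bit. -/
theorem symmetrize_condEntropy_le_average {α : Type*} [Fintype α] (M : α → α → ℝ)
    (hM : IsJointProbMat M) :
    condHYX (symmetrize M) ≤ (1/2) * (condHYX M + condHXY M) + 1 := by
  have hjoint := jointH_symmetrize_le hM
  have hmarg := midpoint_binH_marg_le_binH_rowMarg_symmetrize hM.1
  unfold condHYX condHXY
  linarith
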